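/- arXiv:2410.11760 — 4 statements merged into one kernel-verified Lean document; each statement's English description precedes it below -/
import Mathlib

section
/- Let g : [0,∞) → ℝ satisfy g_t > 0 for all t ≥ 0 and be right-differentiable at t = 0, i.e. (g_t − g_0)/t converges to some g'_0 ∈ ℝ as t → 0⁺. Then for every x ∈ ℝ and every y ∈ ℝ with y/g_0 ∈ ∂|·|(x), the family of second-order difference quotient functions Δ_t²G(x|y)(z) := (g_t|x + t z| − g_t|x| − t y z)/t², for t > 0, Mosco epi-converges on ℝ to the function z ↦ I_{K_{x, y/g_0}}(z) + g'_0 (y/g_0) z. Precisely, for every z ∈ ℝ: (1) if z ∈ K_{x,y/g_0}, then Δ_t²G(x|y)(z) converges to g'_0 (y/g_0) z as t → 0⁺; (2) for every family (z_t)_{t>0} converging to z as t → 0⁺: if z ∈ K_{x,y/g_0} then liminf_{t→0⁺} Δ_t²G(x|y)(z_t) ≥ g'_0 (y/g_0) z, and if z ∉ K_{x,y/g_0} then Δ_t²G(x|y)(z_t) tends to +∞. -/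
open Filter Topology Set

/-- The set `K_{x,w}` associated with the second-order epi-derivative of the absolute value. -/
def Kset (x w : ℝ) : Set ℝ :=
  if x ≠ 0 then Set.univ
  else if w = 1 then Set.Ici 0
  else if w = -1 then Set.Iic 0
  else {0}

/-!
Write `w = y / g₀`. For `t > 0` the quotient splits as
`g_t · Δ_t²|·|(x|w)(z) + ((g_t - g₀)/t) · w z`, where
`Δ_t²|·|(x|w)(z) = (|x + t z| - |x| - t w z)/t²` is nonnegative because `w ∈ ∂|·|(x)`.
The second summand converges to `g'₀ w z` along any `z_t → z`. For `x ≠ 0` the sign of `x + t z_t`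
is eventually that of `x`, so the first summand eventually vanishes; for `x = 0` it equals
`g_t (|z_t| - w z_t)/t`, which vanishes at `z_t = z ∈ K_{0,w}` and tends to `+∞` when `z ∉ K_{0,w}`,
since then `|z| - w z > 0` and `g_t → g₀ > 0`.
-/

theorem mul_le_abs_of_abs_le_one {w : ℝ} (hw : |w| ≤ 1) (u : ℝ) : w * u ≤ |u| :=
  calc w * u ≤ |w| * |u| := (le_abs_self _).trans (abs_mul w u).le
    _ ≤ |u| := mul_le_of_le_one_left (abs_nonneg u) hw

theorem tendsto_nhdsGT_zero_of_tendsto_slope {g : ℝ → ℝ} {L : ℝ}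
    (h : Tendsto (fun t => (g t - g 0) / t) (𝓝[>] 0) (𝓝 L)) :
    Tendsto g (𝓝[>] 0) (𝓝 (g 0)) := by
  have hlim : Tendsto (fun t => (g t - g 0) / t * t + g 0) (𝓝[>] 0) (𝓝 (L * 0 + g 0)) :=
    (h.mul (tendsto_id.mono_left nhdsWithin_le_nhds)).add_const _
  rw [mul_zero, zero_add] at hlim
  refine hlim.congr' ?_
  filter_upwards [self_mem_nhdsWithin] with t (ht : 0 < t)
  rw [div_mul_cancel₀ _ ht.ne', sub_add_cancel]

noncomputable def absSecondDiffQuot (x w t u : ℝ) : ℝ := (|x + t * u| - |x| - t * w * u) / t ^ 2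

theorem scaled_abs_secondDiffQuot_eq {g₀ gₜ x y t u : ℝ} (hg₀ : g₀ ≠ 0) (ht : t ≠ 0) :
    (gₜ * |x + t * u| - gₜ * |x| - t * y * u) / t ^ 2 =
      gₜ * absSecondDiffQuot x (y / g₀) t u + (gₜ - g₀) / t * (y / g₀ * u) := by
  unfold absSecondDiffQuot
  field_simp
  ring

theorem mem_Kset_zero_iff {w : ℝ} (hw : |w| ≤ 1) (u : ℝ) : u ∈ Kset 0 w ↔ w * u = |u| := by
  simp only [Kset, ne_eq, not_true_eq_false, if_false]
  split_ifs with h₁ h₂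
  · rw [h₁, mem_Ici, one_mul, eq_comm, abs_eq_self]
  · rw [h₂, mem_Iic, neg_one_mul, eq_comm, abs_eq_neg_self]
  · have hlt : |w| < 1 := hw.lt_of_ne fun h => (abs_eq zero_le_one).1 h |>.elim h₁ h₂
    refine ⟨fun hu => by simp [mem_singleton_iff.1 hu], fun h => ?_⟩
    by_contra hu
    have hwu : w * u ≤ |w| * |u| := (le_abs_self _).trans (abs_mul w u).le
    nlinarith [abs_pos.2 hu]

section AbsSubgradient

variable {x w : ℝ} (hw : ∀ v, w * (v - x) ≤ |v| - |x|)
include hw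

theorem abs_le_one_of_subgradient_abs : |w| ≤ 1 := by
  have h₁ := hw (x + 1)
  have h₂ := hw (x - 1)
  simp only [add_sub_cancel_left, sub_sub_cancel_left, mul_one, mul_neg] at h₁ h₂
  rw [abs_le]
  constructor <;> linarith [abs_add_le x 1, abs_sub x 1, abs_one (α := ℝ)]

theorem mul_eq_abs_of_subgradient_abs : w * x = |x| := by
  have h₀ := hw 0
  simp only [zero_sub, mul_neg, abs_zero] at h₀
  linarith [mul_le_abs_of_abs_le_one (abs_le_one_of_subgradient_abs hw) x]

/-- A subgradient of `|·|` at `x ≠ 0` is `sign x`, so `|·|` is affine near `x`. -/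
theorem abs_add_eq_of_subgradient_abs {v : ℝ} (hv : |v| < |x|) : |x + v| = |x| + w * v := by
  have hwx := mul_eq_abs_of_subgradient_abs hw
  have hw_abs : |w| = 1 := by
    refine le_antisymm (abs_le_one_of_subgradient_abs hw) (le_of_mul_le_mul_right ?_
      ((abs_nonneg v).trans_lt hv))
    rw [one_mul, ← abs_mul, ← hwx]
    exact le_abs_self _
  have hpos : 0 < w * (x + v) := by
    have hwv := neg_abs_le (w * v)
    rw [abs_mul, hw_abs, one_mul] at hwv
    linarith
  rw [← one_mul |x + v|, ← hw_abs, ← abs_mul, abs_of_pos hpos, mul_add, hwx]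

theorem absSecondDiffQuot_nonneg (t u : ℝ) : 0 ≤ absSecondDiffQuot x w t u := by
  have h := hw (x + t * u)
  rw [add_sub_cancel_left] at h
  exact div_nonneg (by linarith) (sq_nonneg t)

theorem eventually_absSecondDiffQuot_eq_zero (hx : x ≠ 0) {zt : ℝ → ℝ} {z : ℝ}
    (hzt : Tendsto zt (𝓝[>] 0) (𝓝 z)) :
    ∀ᶠ t in 𝓝[>] 0, absSecondDiffQuot x w t (zt t) = 0 := by
  have hsmall : Tendsto (fun t => |t * zt t|) (𝓝[>] 0) (𝓝 0) := by
    simpa using ((tendsto_id.mono_left nhdsWithin_le_nhds).mul hzt).abs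
  filter_upwards [hsmall.eventually_lt_const (abs_pos.2 hx)] with t ht
  rw [absSecondDiffQuot, abs_add_eq_of_subgradient_abs hw ht]
  ring

theorem eventually_absSecondDiffQuot_eq_zero_of_mem_Kset {z : ℝ} (hz : z ∈ Kset x w) :
    ∀ᶠ t in 𝓝[>] 0, absSecondDiffQuot x w t z = 0 := by
  rcases eq_or_ne x 0 with rfl | hx
  · filter_upwards [self_mem_nhdsWithin] with t (ht : 0 < t)
    rw [absSecondDiffQuot, mul_assoc, (mem_Kset_zero_iff (abs_le_one_of_subgradient_abs hw) z).1 hz,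
      zero_add, abs_zero, abs_mul, abs_of_pos ht]
    ring
  · exact eventually_absSecondDiffQuot_eq_zero hw hx tendsto_const_nhds

theorem tendsto_absSecondDiffQuot_atTop {zt : ℝ → ℝ} {z : ℝ} (hz : z ∉ Kset x w)
    (hzt : Tendsto zt (𝓝[>] 0) (𝓝 z)) :
    Tendsto (fun t => absSecondDiffQuot x w t (zt t)) (𝓝[>] 0) atTop := by
  obtain rfl : x = 0 := by
    by_contra hx
    exact hz (by simp [Kset, hx])
  have hw₁ := abs_le_one_of_subgradient_abs hw
  have hgap : 0 < |z| - w * z :=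
    (sub_nonneg.2 (mul_le_abs_of_abs_le_one hw₁ z)).lt_of_ne
      fun h => hz ((mem_Kset_zero_iff hw₁ z).2 (by linarith))
  refine ((hzt.abs.sub (hzt.const_mul w)).pos_mul_atTop hgap tendsto_inv_nhdsGT_zero).congr' ?_
  filter_upwards [self_mem_nhdsWithin] with t (ht : 0 < t)
  simp only [absSecondDiffQuot, zero_add, abs_mul, abs_of_pos ht, abs_zero]
  field_simp
  ring

end AbsSubgradient

/-- The parameterized function `G(t,x) = g_t |x|` is twice epi-differentiable at `x` for
`y` with `y / g_0 ∈ ∂|·|(x)`: the family of second-order difference quotients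
`Δ_t²G(x|y)(z) = (g_t |x + t z| - g_t |x| - t y z)/t²` Mosco epi-converges, as `t → 0⁺`,
to `z ↦ I_{K_{x, y/g_0}}(z) + g'_0 (y/g_0) z`. -/
theorem parameterized_abs_twice_epi_differentiable
    (g : ℝ → ℝ) (hg : ∀ t : ℝ, 0 ≤ t → 0 < g t)
    (g0' : ℝ) (hdiff : Tendsto (fun t : ℝ => (g t - g 0) / t) (𝓝[>] (0 : ℝ)) (𝓝 g0'))
    (x y : ℝ) (hy : ∀ w : ℝ, (y / g 0) * (w - x) ≤ |w| - |x|) (z : ℝ) :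
    -- (1) if `z ∈ K_{x, y/g_0}`, then the quotient at the constant family `z` converges
    (z ∈ Kset x (y / g 0) →
      Tendsto (fun t : ℝ => (g t * |x + t * z| - g t * |x| - t * y * z) / t ^ 2)
        (𝓝[>] (0 : ℝ)) (𝓝 (g0' * (y / g 0) * z))) ∧
    -- (2) lower bounds along any family converging to `z`
    (∀ zt : ℝ → ℝ, Tendsto zt (𝓝[>] (0 : ℝ)) (𝓝 z) →
      (z ∈ Kset x (y / g 0) →
        ((g0' * (y / g 0) * z : ℝ) : EReal) ≤ Filter.liminf
          (fun t : ℝ =>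
            (((g t * |x + t * zt t| - g t * |x| - t * y * zt t) / t ^ 2 : ℝ) : EReal))
          (𝓝[>] (0 : ℝ))) ∧
      (z ∉ Kset x (y / g 0) →
        Tendsto (fun t : ℝ => (g t * |x + t * zt t| - g t * |x| - t * y * zt t) / t ^ 2)
          (𝓝[>] (0 : ℝ)) atTop)) := by
  have hg₀ : 0 < g 0 := hg 0 le_rfl
  have hsplit (u : ℝ → ℝ) :
      (fun t => (g t * |x + t * u t| - g t * |x| - t * y * u t) / t ^ 2) =ᶠ[𝓝[>] 0]
        fun t =>
          g t * absSecondDiffQuot x (y / g 0) t (u t) + (g t - g 0) / t * (y / g 0 * u t) := by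
    filter_upwards [self_mem_nhdsWithin] with t (ht : 0 < t)
    exact scaled_abs_secondDiffQuot_eq hg₀.ne' ht.ne'
  have hslope {u : ℝ → ℝ} (hu : Tendsto u (𝓝[>] 0) (𝓝 z)) :
      Tendsto (fun t => (g t - g 0) / t * (y / g 0 * u t)) (𝓝[>] 0)
        (𝓝 (g0' * (y / g 0) * z)) := by
    simpa only [mul_assoc] using hdiff.mul (hu.const_mul (y / g 0))
  refine ⟨fun hz => ?_, fun zt hzt => ⟨fun hz => ?_, fun hz => ?_⟩⟩
  · refine (hslope tendsto_const_nhds).congr' ?_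
    filter_upwards [hsplit fun _ => z, eventually_absSecondDiffQuot_eq_zero_of_mem_Kset hy hz]
      with t hQ hΔ
    rw [hQ, hΔ, mul_zero, zero_add]
  · rw [← (EReal.tendsto_coe.2 (hslope hzt)).liminf_eq]
    refine liminf_le_liminf ?_
    filter_upwards [hsplit zt, self_mem_nhdsWithin] with t hQ (ht : 0 < t)
    rw [EReal.coe_le_coe_iff, hQ, le_add_iff_nonneg_left]
    exact mul_nonneg (hg t ht.le).le (absSecondDiffQuot_nonneg hy t (zt t))
  · refine (((tendsto_nhdsGT_zero_of_tendsto_slope hdiff).pos_mul_atTop hg₀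
      (tendsto_absSecondDiffQuot_atTop hy hz hzt)).atTop_add (hslope hzt)).congr' ?_
    exact (hsplit zt).symm
end

section
/- Let g : [0,∞) → ℝ satisfy g_t > 0 for all t ≥ 0 and be right-differentiable at t = 0 with right-derivative g'_0 := lim_{t→0⁺}(g_t − g_0)/t. Let x, y ∈ ℝ with y/g_0 ∈ ∂|·|(x) and let z ∈ K_{x, y/g_0}. Then for every family (z_t)_{t>0} of real numbers converging to z as t → 0⁺, one has liminf_{t→0⁺} (g_t|x + t z_t| − g_t|x| − t y z_t)/t² ≥ g'_0 (y/g_0) z. -/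
open Filter Topology Set

/-
The subgradient inequality `w (x + t z - x) ≤ |x + t z| - |x|`, multiplied by `g_t ≥ 0`, bounds the
quotient below by `w z (g_t - g_0) / t` for every `t > 0`, and this tends to `g'_0 w z`.
-/

theorem mul_slope_le_second_order_quotient {f : ℝ → ℝ} {x w : ℝ}
    (hw : ∀ u, w * (u - x) ≤ f u - f x) {a b t z : ℝ} (ha : 0 ≤ a) (ht : 0 < t) :
    w * z * ((a - b) / t) ≤ (a * f (x + t * z) - a * f x - t * (w * b) * z) / t ^ 2 := by
  have hsub : w * (t * z) ≤ f (x + t * z) - f x := by simpa using hw (x + t * z)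
  have hnum : t * (w * z * (a - b)) ≤ a * f (x + t * z) - a * f x - t * (w * b) * z := by
    nlinarith [mul_le_mul_of_nonneg_left hsub ha]
  calc w * z * ((a - b) / t) = t * (w * z * (a - b)) / t ^ 2 := by field_simp
    _ ≤ _ := by gcongr

theorem liminf_second_order_quotient_parameterized_ge_general
    (g : ℝ → ℝ) (hg : ∀ t : ℝ, 0 ≤ t → 0 < g t)
    (g0' : ℝ) (hdiff : Tendsto (fun t : ℝ => (g t - g 0) / t) (𝓝[>] (0 : ℝ)) (𝓝 g0'))
    (x y : ℝ) (hy : ∀ w : ℝ, (y / g 0) * (w - x) ≤ |w| - |x|)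
    (z : ℝ)
    (zt : ℝ → ℝ) (hzt : Tendsto zt (𝓝[>] (0 : ℝ)) (𝓝 z)) :
    ((g0' * (y / g 0) * z : ℝ) : EReal) ≤ Filter.liminf
      (fun t : ℝ =>
        (((g t * |x + t * zt t| - g t * |x| - t * y * zt t) / t ^ 2 : ℝ) : EReal))
      (𝓝[>] (0 : ℝ)) := by
  set w := y / g 0
  have hwy : w * g 0 = y := div_mul_cancel₀ y (hg 0 le_rfl).ne'
  have hlim : Tendsto (fun t => w * zt t * ((g t - g 0) / t)) (𝓝[>] 0) (𝓝 (g0' * w * z)) := by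
    convert (hzt.const_mul w).mul hdiff using 2
    ring
  rw [← ((continuous_coe_real_ereal.tendsto _).comp hlim).liminf_eq]
  refine liminf_le_liminf (eventually_nhdsWithin_of_forall fun t (ht : 0 < t) => ?_)
  rw [Function.comp_apply, EReal.coe_le_coe_iff, ← hwy]
  exact mul_slope_le_second_order_quotient hy (hg t ht.le).le ht

theorem liminf_second_order_quotient_parameterized_ge
    (g : ℝ → ℝ) (hg : ∀ t : ℝ, 0 ≤ t → 0 < g t)
    (g0' : ℝ) (hdiff : Tendsto (fun t : ℝ => (g t - g 0) / t) (𝓝[>] (0 : ℝ)) (𝓝 g0'))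
    (x y : ℝ) (hy : ∀ w : ℝ, (y / g 0) * (w - x) ≤ |w| - |x|)
    (z : ℝ) (hz : z ∈ Kset x (y / g 0))
    (zt : ℝ → ℝ) (hzt : Tendsto zt (𝓝[>] (0 : ℝ)) (𝓝 z)) :
    ((g0' * (y / g 0) * z : ℝ) : EReal) ≤ Filter.liminf
      (fun t : ℝ =>
        (((g t * |x + t * zt t| - g t * |x| - t * y * zt t) / t ^ 2 : ℝ) : EReal))
      (𝓝[>] (0 : ℝ)) :=
  liminf_second_order_quotient_parameterized_ge_general g hg g0' hdiff x y hy z zt hzt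
end

section
/- Let g : [0,∞) → ℝ satisfy g_t > 0 for all t ≥ 0 and be right-differentiable at t = 0 with right-derivative g'_0 := lim_{t→0⁺}(g_t − g_0)/t. Let x, y ∈ ℝ with y/g_0 ∈ ∂|·|(x) and let z ∈ ℝ with z ∉ K_{x, y/g_0}. Then for every family (z_t)_{t>0} of real numbers converging to z as t → 0⁺, the quotient (g_t|x + t z_t| − g_t|x| − t y z_t)/t² tends to +∞ as t → 0⁺. -/
open Filter Topology Set

/-!
Since `z ∉ K_{x,w}` forces `x = 0`, the quotient equals `(g_t |z_t| - y z_t) / t`. Its numerator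
tends to `g_0 |z| - y z = g_0 (|z| - w z)` with `w = y / g_0 ∈ [-1, 1]`, and `w z < |z|` exactly
when `z ∉ K_{0,w}`; a positive limit divided by `t → 0⁺` tends to `+∞`.
-/

theorem eq_zero_of_notMem_Kset {x w z : ℝ} (hz : z ∉ Kset x w) : x = 0 := by
  by_contra hx
  exact hz (by simp [Kset, hx])

theorem abs_le_one_of_forall_mul_le_abs {w : ℝ} (hw : ∀ v : ℝ, w * v ≤ |v|) : |w| ≤ 1 :=
  abs_le.mpr ⟨by linarith [show -w ≤ 1 by simpa using hw (-1)], by simpa using hw 1⟩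

theorem mul_lt_abs_of_notMem_Kset {w z : ℝ} (hw : |w| ≤ 1) (hz : z ∉ Kset 0 w) :
    w * z < |z| := by
  obtain ⟨hw_lower, hw_upper⟩ := abs_le.mp hw
  rcases lt_trichotomy z 0 with hneg | rfl | hpos
  · have hw_ne : w ≠ -1 := fun h => hz (by norm_num [Kset, h, hneg.le])
    rw [abs_of_neg hneg]
    nlinarith [lt_of_le_of_ne hw_lower (Ne.symm hw_ne)]
  · exact absurd (show (0 : ℝ) ∈ Kset 0 w by unfold Kset; split_ifs <;> simp) hz
  · have hw_ne : w ≠ 1 := fun h => hz (by simp [Kset, h, hpos.le])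
    rw [abs_of_pos hpos]
    nlinarith [lt_of_le_of_ne hw_upper hw_ne]

theorem hasDerivWithinAt_Ioi_of_tendsto_div {g : ℝ → ℝ} {a L : ℝ}
    (h : Tendsto (fun t => (g t - g a) / (t - a)) (𝓝[>] a) (𝓝 L)) :
    HasDerivWithinAt g L (Ioi a) a := by
  rwa [hasDerivWithinAt_iff_tendsto_slope' self_notMem_Ioi, slope_fun_def_field]

theorem mul_abs_mul_sub_div_sq_of_pos {t c y u : ℝ} (ht : 0 < t) :
    (c * |t * u| - t * y * u) / t ^ 2 = (c * |u| - y * u) * t⁻¹ := by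
  rw [abs_mul, abs_of_pos ht]
  field_simp

theorem second_order_quotient_parameterized_tendsto_atTop
    (g : ℝ → ℝ) (hg : ∀ t : ℝ, 0 ≤ t → 0 < g t)
    (g0' : ℝ) (hdiff : Tendsto (fun t : ℝ => (g t - g 0) / t) (𝓝[>] (0 : ℝ)) (𝓝 g0'))
    (x y : ℝ) (hy : ∀ w : ℝ, (y / g 0) * (w - x) ≤ |w| - |x|)
    (z : ℝ) (hz : z ∉ Kset x (y / g 0))
    (zt : ℝ → ℝ) (hzt : Tendsto zt (𝓝[>] (0 : ℝ)) (𝓝 z)) :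
    Tendsto (fun t : ℝ => (g t * |x + t * zt t| - g t * |x| - t * y * zt t) / t ^ 2)
      (𝓝[>] (0 : ℝ)) atTop := by
  obtain rfl := eq_zero_of_notMem_Kset hz
  have hg0 : 0 < g 0 := hg 0 le_rfl
  have hw : |y / g 0| ≤ 1 := abs_le_one_of_forall_mul_le_abs fun v => by simpa using hy v
  have hlimit_pos : 0 < g 0 * |z| - y * z := by
    have := mul_lt_mul_of_pos_left (mul_lt_abs_of_notMem_Kset hw hz) hg0
    rwa [← mul_assoc, mul_div_cancel₀ _ hg0.ne', ← sub_pos] at this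
  have hg_cont : Tendsto g (𝓝[>] 0) (𝓝 (g 0)) :=
    (hasDerivWithinAt_Ioi_of_tendsto_div (by simpa using hdiff)).continuousWithinAt
  have hnum : Tendsto (fun t => g t * |zt t| - y * zt t) (𝓝[>] 0) (𝓝 (g 0 * |z| - y * z)) :=
    (hg_cont.mul hzt.abs).sub (hzt.const_mul y)
  refine (hnum.pos_mul_atTop hlimit_pos tendsto_inv_nhdsGT_zero).congr' ?_
  filter_upwards [self_mem_nhdsWithin] with t ht
  simpa using (mul_abs_mul_sub_div_sq_of_pos (c := g t) (y := y) (u := zt t) ht).symm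
end

section
/- Let g : [0,∞) → ℝ satisfy g_t > 0 for all t ≥ 0 and be right-differentiable at t = 0 with right-derivative g'_0 := lim_{t→0⁺}(g_t − g_0)/t. Let x, y ∈ ℝ with y/g_0 ∈ ∂|·|(x) and let z ∈ K_{x, y/g_0}. Then (g_t|x + t z| − g_t|x| − t y z)/t² converges to g'_0 (y/g_0) z as t → 0⁺. -/
open Filter Topology Set

/-!
For `w = y / g 0 ∈ ∂|·|(x)` and `z ∈ K_{x,w}`, the function `|·|` is exactly affine along the
ray `x + t z` for small `t > 0`: `|x + t z| = |x| + t w z`. Substituting this and `y = g 0 w`,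
the quotient collapses to `w z (g t - g 0) / t`, which tends to `w z g'_0`.
-/

section Subgradient

variable {x w : ℝ}

theorem mul_eq_abs_of_subgradient (hw : ∀ v : ℝ, w * (v - x) ≤ |v| - |x|) : w * x = |x| := by
  have h0 := hw 0
  have h2 := hw (2 * x)
  rw [abs_zero] at h0
  rw [abs_mul, abs_two] at h2
  linarith

theorem abs_eq_one_of_subgradient (hw : ∀ v : ℝ, w * (v - x) ≤ |v| - |x|) (hx : x ≠ 0) :
    |w| = 1 := by
  have h := congrArg abs (mul_eq_abs_of_subgradient hw)
  rw [abs_mul, abs_abs] at h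
  exact (mul_eq_right₀ (abs_ne_zero.mpr hx)).mp h

theorem mul_eq_abs_of_mem_Kset_zero {z : ℝ} (hz : z ∈ Kset 0 w) : w * z = |z| := by
  simp only [Kset, ne_eq, not_true_eq_false, if_false] at hz
  split_ifs at hz with h1 h2
  · rw [h1, one_mul, abs_of_nonneg hz]
  · rw [h2, neg_one_mul, abs_of_nonpos hz]
  · rw [mem_singleton_iff.mp hz, mul_zero, abs_zero]

theorem eventually_abs_add_mul_eq (hw : ∀ v : ℝ, w * (v - x) ≤ |v| - |x|) {z : ℝ}
    (hz : z ∈ Kset x w) : ∀ᶠ t in 𝓝[>] (0 : ℝ), |x + t * z| = |x| + t * (w * z) := by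
  by_cases hx : x = 0
  · subst hx
    filter_upwards [self_mem_nhdsWithin] with t (ht : 0 < t)
    rw [zero_add, abs_zero, zero_add, mul_eq_abs_of_mem_Kset_zero hz, abs_mul, abs_of_pos ht]
  · have hsmall : ∀ᶠ t in 𝓝 (0 : ℝ), |t * z| < |x| := by
      have : Tendsto (fun t : ℝ => t * z) (𝓝 0) (𝓝 0) := by
        simpa using (tendsto_id (x := 𝓝 (0 : ℝ))).mul_const z
      exact this.abs.eventually (gt_mem_nhds (by simpa using abs_pos.mpr hx))
    filter_upwards [nhdsWithin_le_nhds hsmall] with t ht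
    have hw1 := abs_eq_one_of_subgradient hw hx
    -- `w` is the sign of `x`, and `x + t z` keeps that sign.
    have hpos : 0 < w * (x + t * z) := by
      have : |w * (t * z)| < |x| := by rwa [abs_mul, hw1, one_mul]
      rw [mul_add, mul_eq_abs_of_subgradient hw]
      linarith [neg_abs_le (w * (t * z))]
    calc |x + t * z| = |w * (x + t * z)| := by rw [abs_mul, hw1, one_mul]
      _ = |x| + t * (w * z) := by rw [abs_of_pos hpos, mul_add, mul_eq_abs_of_subgradient hw]; ring

end Subgradient

theorem second_order_quotient_parameterized_tendsto
    (g : ℝ → ℝ) (hg : ∀ t : ℝ, 0 ≤ t → 0 < g t)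
    (g0' : ℝ) (hdiff : Tendsto (fun t : ℝ => (g t - g 0) / t) (𝓝[>] (0 : ℝ)) (𝓝 g0'))
    (x y : ℝ) (hy : ∀ w : ℝ, (y / g 0) * (w - x) ≤ |w| - |x|)
    (z : ℝ) (hz : z ∈ Kset x (y / g 0)) :
    Tendsto (fun t : ℝ => (g t * |x + t * z| - g t * |x| - t * y * z) / t ^ 2)
      (𝓝[>] (0 : ℝ)) (𝓝 (g0' * (y / g 0) * z)) := by
  set w := y / g 0
  have hy_eq : y = g 0 * w := (mul_div_cancel₀ y (hg 0 le_rfl).ne').symm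
  have hquot : ∀ᶠ t in 𝓝[>] (0 : ℝ), w * z * ((g t - g 0) / t)
      = (g t * |x + t * z| - g t * |x| - t * y * z) / t ^ 2 := by
    filter_upwards [eventually_abs_add_mul_eq hy hz, self_mem_nhdsWithin] with t habs (ht : 0 < t)
    rw [habs, hy_eq]
    field_simp
    ring
  rw [show g0' * w * z = w * z * g0' by ring]
  exact (hdiff.const_mul (w * z)).congr' hquot
end
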